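/- For every k ∈ ℤ and ℓ ∈ ℕ, the function V_{k,ℓ}(x) = r^{|k|} e^{−B₀r²/4} P_{k,ℓ}(B₀r²/2) e^{ikθ} (in polar coordinates x = (r cos θ, r sin θ)) is a nonzero element of L²(ℝ²) and satisfies, at every x ≠ 0, the eigenvalue equation −ΔV_{k,ℓ} + iB₀(x₁∂₂V_{k,ℓ} − x₂∂₁V_{k,ℓ}) + (B₀²/4)|x|² V_{k,ℓ} = (2ℓ + 1 + |k| − k) B₀ · V_{k,ℓ}. Moreover, the set of these eigenvalues {(2ℓ + 1 + |k| − k)B₀ : k ∈ ℤ, ℓ ∈ ℕ} equals the set of Landau levels {(2n+1)B₀ : n ∈ ℕ}. -/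

import Mathlib

/-!
Put `m = |k|`, `t = |x|²` and `w = x₁ + c x₂`, where `c = i` for `k ≥ 0` and `c = -i` for `k < 0`
(so `w` is `z` or `z̄`). Then `V_{k,ℓ} = w^m g(t)` with `g(t) = e^{-B₀t/4} P(B₀t/2)`.
As `c² = -1`, `w^m` is harmonic and `∂₁(w^m) x₁ + ∂₂(w^m) x₂ = m w^m`, so
`Δ(w^m g(t)) = w^m (4t g'' + 4(m+1) g')`, while `x₁∂₂ − x₂∂₁` multiplies `V_{k,ℓ}` by `c m`,
and `i c m = -k`. The eigenvalue equation thus reduces to the radial equation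
`4t g'' + 4(m+1) g' = (B₀²t/4 − (2ℓ+1+m)B₀) g`, which after `s = B₀t/2` is Kummer's equation
`s P'' + (1+m−s) P' + ℓ P = 0`; on coefficients, this is the recursion of the Pochhammer ratios.
Moreover `‖V_{k,ℓ}‖²` is a polynomial in `t` times `e^{-B₀t/2}`, hence dominated by a Gaussian,
and the continuous function `V_{k,ℓ}` is nonzero at `(a, 0)` whenever `a ≠ 0` and `B₀a²/2` is not
one of the finitely many roots of `P`.
-/

open MeasureTheory Real Set

/-- Pochhammer symbol `(a)_n = a(a+1)⋯(a+n−1)`, with `(a)₀ = 1`. -/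
noncomputable def poch (a : ℝ) (n : ℕ) : ℝ := ∏ i ∈ Finset.range n, (a + i)

/-- The polynomial `P_{k,ℓ}(s) = Σ_{n=0}^{ℓ} ((−ℓ)_n/((1+|k|)_n)) sⁿ/n!`. -/
noncomputable def Pkl (k : ℤ) (ℓ : ℕ) (s : ℝ) : ℝ :=
  ∑ n ∈ Finset.range (ℓ + 1),
    poch (-(ℓ : ℝ)) n / poch (1 + (k.natAbs : ℝ)) n * s ^ n / (n.factorial : ℝ)

/-- The eigenfunction `V_{k,ℓ}(x) = r^{|k|} e^{−B₀r²/4} P_{k,ℓ}(B₀r²/2) e^{ikθ}` of the Landau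
Hamiltonian, written in Cartesian coordinates via `r = |x|`, `e^{iθ} = (x₁+ix₂)/|x|`. -/
noncomputable def Vkl (B₀ : ℝ) (k : ℤ) (ℓ : ℕ) (x : ℝ × ℝ) : ℂ :=
  (((Real.sqrt (x.1 ^ 2 + x.2 ^ 2)) ^ k.natAbs * Real.exp (-(B₀ * (x.1 ^ 2 + x.2 ^ 2)) / 4) *
      Pkl k ℓ (B₀ * (x.1 ^ 2 + x.2 ^ 2) / 2) : ℝ) : ℂ) *
    (((x.1 : ℂ) + (x.2 : ℂ) * Complex.I) / ((Real.sqrt (x.1 ^ 2 + x.2 ^ 2) : ℝ) : ℂ)) ^ k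

open Polynomial

lemma Polynomial.coeff_X_mul_derivative {R : Type*} [CommSemiring R] (p : R[X]) (n : ℕ) :
    (X * derivative p).coeff n = n * p.coeff n := by
  rcases n with _ | n
  · simp
  · rw [coeff_X_mul, coeff_derivative]; push_cast; ring

noncomputable def kummerCoeff (a b : ℝ) (n : ℕ) : ℝ := poch a n / poch b n / n.factorial

lemma poch_succ (a : ℝ) (n : ℕ) : poch a (n + 1) = poch a n * (a + n) :=
  Finset.prod_range_succ _ _

lemma poch_pos {b : ℝ} (hb : 0 < b) (n : ℕ) : 0 < poch b n :=
  Finset.prod_pos fun _ _ => by positivity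

lemma poch_neg_natCast_eq_zero {ℓ n : ℕ} (h : ℓ < n) : poch (-ℓ) n = 0 :=
  Finset.prod_eq_zero (Finset.mem_range.mpr h) (by ring)

lemma kummerCoeff_succ {b : ℝ} (hb : 0 < b) (a : ℝ) (n : ℕ) :
    (n + 1) * (b + n) * kummerCoeff a b (n + 1) = (a + n) * kummerCoeff a b n := by
  have hpoch := poch_pos hb n
  simp only [kummerCoeff, poch_succ, Nat.factorial_succ]
  field_simp
  push_cast
  ring

/-- Kummer's series `M(-ℓ, b, s)`, which terminates at degree `ℓ`. -/
noncomputable def kummerPoly (ℓ : ℕ) (b : ℝ) : ℝ[X] :=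
  ∑ n ∈ Finset.range (ℓ + 1), C (kummerCoeff (-ℓ) b n) * X ^ n

lemma coeff_kummerPoly (ℓ : ℕ) (b : ℝ) (n : ℕ) :
    (kummerPoly ℓ b).coeff n = kummerCoeff (-ℓ) b n := by
  simp only [kummerPoly, finsetSum_coeff, coeff_C_mul_X_pow]
  rw [Finset.sum_ite_eq]
  split_ifs with h
  · rfl
  · simp [kummerCoeff, poch_neg_natCast_eq_zero (by simpa using h)]

lemma kummerPoly_ode {b : ℝ} (hb : 0 < b) (ℓ : ℕ) :
    X * derivative (derivative (kummerPoly ℓ b)) + (C b - X) * derivative (kummerPoly ℓ b)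
      + C (ℓ : ℝ) * kummerPoly ℓ b = 0 := by
  ext n
  have hrec := kummerCoeff_succ hb (-ℓ) n
  simp only [coeff_add, sub_mul, coeff_sub, coeff_X_mul_derivative, coeff_C_mul, coeff_derivative,
    coeff_kummerPoly, coeff_zero]
  linear_combination hrec

lemma kummerPoly_ne_zero (ℓ : ℕ) (b : ℝ) : kummerPoly ℓ b ≠ 0 := fun h => by
  simpa [kummerCoeff, poch, h] using coeff_kummerPoly ℓ b 0

lemma Pkl_eq_eval_kummerPoly (k : ℤ) (ℓ : ℕ) (s : ℝ) :
    Pkl k ℓ s = (kummerPoly ℓ (1 + k.natAbs)).eval s := by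
  simp only [Pkl, kummerPoly, kummerCoeff, eval_finsetSum, eval_mul, eval_C, eval_pow, eval_X]
  exact Finset.sum_congr rfl fun n _ => by ring

noncomputable def radialProfile (B : ℝ) (P : ℝ[X]) (t : ℝ) : ℝ :=
  Real.exp (-(B * t) / 4) * P.eval (B * t / 2)

lemma hasDerivAt_eval_mul_div_two (B : ℝ) (P : ℝ[X]) (t : ℝ) :
    HasDerivAt (fun t => P.eval (B * t / 2)) (B / 2 * (derivative P).eval (B * t / 2)) t := by
  have hlin : HasDerivAt (fun t => B * t / 2) (B / 2) t := by
    simpa using ((hasDerivAt_id t).const_mul B).div_const 2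
  exact ((P.hasDerivAt (B * t / 2)).comp t hlin).congr_deriv (mul_comm _ _)

lemma hasDerivAt_exp_neg_mul_div_four (B : ℝ) (t : ℝ) :
    HasDerivAt (fun t => Real.exp (-(B * t) / 4)) (-(B / 4) * Real.exp (-(B * t) / 4)) t := by
  have hlin : HasDerivAt (fun t => -(B * t) / 4) (-(B / 4)) t := by
    simpa [neg_div] using ((hasDerivAt_id t).const_mul B).neg.div_const 4
  exact hlin.exp.congr_deriv (mul_comm _ _)

lemma radialProfile_ode (B b lam : ℝ) (P : ℝ[X])
    (hP : X * derivative (derivative P) + (C b - X) * derivative P + C lam * P = 0) :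
    ∃ g' g'' : ℝ → ℝ, (∀ t, HasDerivAt (radialProfile B P) (g' t) t) ∧
      (∀ t, HasDerivAt g' (g'' t) t) ∧
      ∀ t, 4 * t * g'' t + 4 * b * g' t =
        (B ^ 2 * t / 4 - (2 * lam + b) * B) * radialProfile B P t := by
  refine ⟨fun t => Real.exp (-(B * t) / 4) *
      (B / 2 * (derivative P).eval (B * t / 2) - B / 4 * P.eval (B * t / 2)),
    fun t => Real.exp (-(B * t) / 4) * (B ^ 2 / 4 * (derivative (derivative P)).eval (B * t / 2)
      - B ^ 2 / 4 * (derivative P).eval (B * t / 2) + B ^ 2 / 16 * P.eval (B * t / 2)),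
    fun t => ?_, fun t => ?_, fun t => ?_⟩
  · exact ((hasDerivAt_exp_neg_mul_div_four B t).fun_mul
      (hasDerivAt_eval_mul_div_two B P t)).congr_deriv (by ring)
  · exact ((hasDerivAt_exp_neg_mul_div_four B t).fun_mul
      (((hasDerivAt_eval_mul_div_two B (derivative P) t).const_mul (B / 2)).fun_sub
        ((hasDerivAt_eval_mul_div_two B P t).const_mul (B / 4)))).congr_deriv (by ring)
  · have hkummer := congrArg (eval (B * t / 2)) hP
    simp only [eval_add, eval_mul, eval_sub, eval_X, eval_C, eval_zero] at hkummer
    rw [radialProfile]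
    linear_combination 2 * B * Real.exp (-(B * t) / 4) * hkummer

/-- The Landau Hamiltonian `(i∇ + A)²`, `A = (B/2)(−x₂, x₁)`, expanded in Cartesian coordinates. -/
noncomputable def landauOp (B : ℝ) (u : ℝ × ℝ → ℂ) (x : ℝ × ℝ) : ℂ :=
  -(deriv (fun a : ℝ => deriv (fun a' : ℝ => u (a', x.2)) a) x.1 +
      deriv (fun b : ℝ => deriv (fun b' : ℝ => u (x.1, b')) b) x.2)
    + Complex.I * (B : ℂ) * ((x.1 : ℂ) * deriv (fun b : ℝ => u (x.1, b)) x.2 -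
        (x.2 : ℂ) * deriv (fun a : ℝ => u (a, x.2)) x.1)
    + ((B ^ 2 / 4 : ℝ) : ℂ) * ((x.1 ^ 2 + x.2 ^ 2 : ℝ) : ℂ) * u x

section RadialCalculus

variable {w : ℝ → ℂ} {v : ℂ} {G G' G'' : ℝ → ℂ}

lemma hasDerivAt_pow_mul_comp_sq_add (hw : ∀ s, HasDerivAt w v s)
    (hG : ∀ t, HasDerivAt G (G' t) t) (m : ℕ) (q s : ℝ) :
    HasDerivAt (fun s => w s ^ m * G (s ^ 2 + q))
      (m * v * (w s ^ (m - 1) * G (s ^ 2 + q)) + 2 * s * (w s ^ m * G' (s ^ 2 + q))) s := by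
  have hsq : HasDerivAt (fun s : ℝ => s ^ 2 + q) (2 * s) s := by
    simpa using (hasDerivAt_pow 2 s).add_const q
  refine (((hw s).pow m).fun_mul ((hG (s ^ 2 + q)).scomp s hsq)).congr_deriv ?_
  simp only [Complex.real_smul, Function.comp_apply, Pi.pow_apply]
  push_cast
  ring

lemma deriv_pow_mul_comp_sq_add (hw : ∀ s, HasDerivAt w v s)
    (hG : ∀ t, HasDerivAt G (G' t) t) (m : ℕ) (q : ℝ) :
    deriv (fun s => w s ^ m * G (s ^ 2 + q)) =
      fun s => m * v * (w s ^ (m - 1) * G (s ^ 2 + q)) + 2 * s * (w s ^ m * G' (s ^ 2 + q)) :=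
  funext fun s => (hasDerivAt_pow_mul_comp_sq_add hw hG m q s).deriv

lemma deriv_deriv_pow_mul_comp_sq_add (hw : ∀ s, HasDerivAt w v s)
    (hG : ∀ t, HasDerivAt G (G' t) t) (hG' : ∀ t, HasDerivAt G' (G'' t) t) (m : ℕ) (q s : ℝ) :
    deriv (deriv fun s => w s ^ m * G (s ^ 2 + q)) s =
      m * (m - 1 : ℕ) * v ^ 2 * w s ^ (m - 1 - 1) * G (s ^ 2 + q)
        + 4 * m * v * s * w s ^ (m - 1) * G' (s ^ 2 + q)
        + w s ^ m * (2 * G' (s ^ 2 + q) + 4 * s ^ 2 * G'' (s ^ 2 + q)) := by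
  rw [deriv_pow_mul_comp_sq_add hw hG]
  have h2s : HasDerivAt (fun s : ℝ => 2 * (s : ℂ)) 2 s := by
    simpa using ((hasDerivAt_id s).ofReal_comp).const_mul (2 : ℂ)
  rw [(((hasDerivAt_pow_mul_comp_sq_add hw hG (m - 1) q s).const_mul (m * v)).fun_add
    (h2s.fun_mul (hasDerivAt_pow_mul_comp_sq_add hw hG' m q s))).deriv]
  ring

end RadialCalculus

open Complex in
lemma landauOp_pow_mul_radial {c : ℂ} (hc : c ^ 2 = -1) {G G' G'' : ℝ → ℂ}
    (hG : ∀ t, HasDerivAt G (G' t) t) (hG' : ∀ t, HasDerivAt G' (G'' t) t) (m : ℕ) (B μ : ℝ)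
    (hode : ∀ t : ℝ, 4 * t * G'' t + 4 * (m + 1) * G' t = (B ^ 2 * t / 4 - μ * B) * G t)
    (x : ℝ × ℝ) :
    landauOp B (fun x => ((x.1 : ℂ) + c * x.2) ^ m * G (x.1 ^ 2 + x.2 ^ 2)) x
      = (μ + I * c * m) * B * (((x.1 : ℂ) + c * x.2) ^ m * G (x.1 ^ 2 + x.2 ^ 2)) := by
  obtain ⟨a, b⟩ := x
  have hwa : ∀ s : ℝ, HasDerivAt (fun s : ℝ => (s : ℂ) + c * b) 1 s := fun s =>
    (hasDerivAt_id s).ofReal_comp.add_const _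
  have hwb : ∀ s : ℝ, HasDerivAt (fun s : ℝ => (a : ℂ) + c * s) c s := fun s => by
    simpa using ((hasDerivAt_id s).ofReal_comp.const_mul c).const_add (a : ℂ)
  have hswap : (fun s : ℝ => ((a : ℂ) + c * s) ^ m * G (a ^ 2 + s ^ 2))
      = fun s : ℝ => ((a : ℂ) + c * s) ^ m * G (s ^ 2 + a ^ 2) := by
    simp only [add_comm (a ^ 2)]
  simp only [landauOp, hswap]
  rw [deriv_deriv_pow_mul_comp_sq_add hwa hG hG', deriv_deriv_pow_mul_comp_sq_add hwb hG hG',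
    deriv_pow_mul_comp_sq_add hwa hG, deriv_pow_mul_comp_sq_add hwb hG]
  simp only [add_comm (b ^ 2) (a ^ 2)]
  have hpow : (m : ℂ) * ((a : ℂ) + c * b) ^ (m - 1) * ((a : ℂ) + c * b)
      = m * ((a : ℂ) + c * b) ^ m := by
    rcases m with _ | m
    · simp
    · rw [Nat.add_sub_cancel, mul_assoc, ← pow_succ]
  have hradial := hode (a ^ 2 + b ^ 2)
  push_cast at hradial ⊢
  linear_combination
    (-(m * (m - 1 : ℕ) * ((a : ℂ) + c * b) ^ (m - 1 - 1) * G (a ^ 2 + b ^ 2))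
      - I * B * m * ((a : ℂ) + c * b) ^ (m - 1) * G (a ^ 2 + b ^ 2) * b) * hc
    + (-4 * G' (a ^ 2 + b ^ 2) + I * B * c * G (a ^ 2 + b ^ 2)) * hpow
    + (-((a : ℂ) + c * b) ^ m) * hradial

open ComplexConjugate in
lemma Complex.norm_pow_natAbs_mul_div_norm_zpow (z : ℂ) (k : ℤ) :
    (‖z‖ : ℂ) ^ k.natAbs * (z / ‖z‖) ^ k = (if 0 ≤ k then z else conj z) ^ k.natAbs := by
  rcases eq_or_ne z 0 with rfl | hz
  · rcases eq_or_ne k 0 with rfl | hk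
    · simp
    · simp [hk, zero_zpow]
  have hr : (‖z‖ : ℂ) ≠ 0 := by exact_mod_cast norm_ne_zero_iff.mpr hz
  obtain ⟨m, rfl | rfl⟩ := Int.eq_nat_or_neg k
  · simp [div_pow, mul_div_cancel₀ _ (pow_ne_zero m hr)]
  rcases Nat.eq_zero_or_pos m with rfl | hm
  · simp
  have hconj : conj z = (‖z‖ : ℂ) ^ 2 / z := by
    rw [← Complex.mul_conj', mul_div_cancel_left₀ _ hz]
  simp only [Int.natAbs_neg, Int.natAbs_natCast, zpow_neg, zpow_natCast, hconj,
    show ¬ (0 : ℤ) ≤ -m by omega, if_false]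
  rw [← inv_pow, inv_div, ← mul_pow]
  congr 1
  field_simp

noncomputable def signI (k : ℤ) : ℂ := if 0 ≤ k then Complex.I else -Complex.I

lemma signI_sq (k : ℤ) : signI k ^ 2 = -1 := by
  unfold signI; split_ifs <;> simp

lemma I_mul_signI_mul_natAbs (k : ℤ) : Complex.I * signI k * k.natAbs = -k := by
  obtain ⟨m, rfl | rfl⟩ := Int.eq_nat_or_neg k
  · simp [signI]
  rcases Nat.eq_zero_or_pos m with rfl | hm
  · simp
  · simp [signI, hm.ne']

open ComplexConjugate in
lemma ofReal_add_signI_mul (k : ℤ) (a b : ℝ) :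
    (a : ℂ) + signI k * b =
      if 0 ≤ k then (a : ℂ) + b * Complex.I else conj ((a : ℂ) + b * Complex.I) := by
  unfold signI
  split_ifs <;> simp [Complex.ext_iff]

lemma Vkl_eq (B : ℝ) (k : ℤ) (ℓ : ℕ) :
    Vkl B k ℓ = fun x => ((x.1 : ℂ) + signI k * x.2) ^ k.natAbs *
      (radialProfile B (kummerPoly ℓ (1 + k.natAbs)) (x.1 ^ 2 + x.2 ^ 2) : ℂ) := by
  ext x
  rw [ofReal_add_signI_mul, ← Complex.norm_pow_natAbs_mul_div_norm_zpow, Complex.norm_add_mul_I]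
  simp only [Vkl, radialProfile, ← Pkl_eq_eval_kummerPoly]
  push_cast
  ring

lemma landauOp_Vkl (B : ℝ) (k : ℤ) (ℓ : ℕ) (x : ℝ × ℝ) :
    landauOp B (Vkl B k ℓ) x
      = (((2 * (ℓ : ℝ) + 1 + (k.natAbs : ℝ) - (k : ℝ)) * B : ℝ) : ℂ) * Vkl B k ℓ x := by
  obtain ⟨g', g'', hg, hg', hode⟩ :=
    radialProfile_ode B (1 + k.natAbs) ℓ _ (kummerPoly_ode (by positivity) ℓ)
  have hop := landauOp_pow_mul_radial (signI_sq k) (G := fun t => (radialProfile B _ t : ℂ))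
    (fun t => (hg t).ofReal_comp) (fun t => (hg' t).ofReal_comp) k.natAbs B
    (2 * ℓ + 1 + k.natAbs) (fun t => by
      have h := congrArg (fun r : ℝ => (r : ℂ)) (hode t)
      push_cast at h ⊢
      linear_combination h) x
  rw [I_mul_signI_mul_natAbs] at hop
  rw [Vkl_eq, hop]
  push_cast
  ring

lemma Polynomial.exists_abs_eval_le_mul_exp (Q : ℝ[X]) {β : ℝ} (hβ : 0 < β) :
    ∃ C, ∀ t, 0 ≤ t → |Q.eval t| ≤ C * Real.exp (β * t) := by
  refine ⟨∑ i ∈ Finset.range (Q.natDegree + 1), |Q.coeff i| * (i.factorial / β ^ i),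
    fun t ht => ?_⟩
  rw [eval_eq_sum_range, Finset.sum_mul]
  refine (Finset.abs_sum_le_sum_abs _ _).trans (Finset.sum_le_sum fun i _ => ?_)
  rw [abs_mul, abs_pow, abs_of_nonneg ht, mul_assoc]
  gcongr
  have hexp := Real.pow_div_factorial_le_exp (β * t) (by positivity) i
  rw [mul_pow, div_le_iff₀ (by positivity)] at hexp
  rw [div_mul_eq_mul_div, le_div_iff₀ (by positivity)]
  linarith

lemma memLp_two_of_norm_sq_le {f : ℝ × ℝ → ℂ} (hf : Continuous f) (Q : ℝ[X]) {β : ℝ}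
    (hβ : 0 < β)
    (hbound : ∀ x : ℝ × ℝ, ‖f x‖ ^ 2 ≤
      Q.eval (x.1 ^ 2 + x.2 ^ 2) * Real.exp (-(β * (x.1 ^ 2 + x.2 ^ 2)))) :
    MemLp f 2 (volume : Measure (ℝ × ℝ)) := by
  obtain ⟨C, hC⟩ := Q.exists_abs_eval_le_mul_exp (half_pos hβ)
  have hgauss : Integrable (fun x : ℝ × ℝ =>
      C * (Real.exp (-(β / 2) * x.1 ^ 2) * Real.exp (-(β / 2) * x.2 ^ 2))) := by
    refine Integrable.const_mul ?_ C
    rw [Measure.volume_eq_prod]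
    exact (integrable_exp_neg_mul_sq (half_pos hβ)).mul_prod
      (integrable_exp_neg_mul_sq (half_pos hβ))
  rw [memLp_two_iff_integrable_sq_norm hf.aestronglyMeasurable]
  refine hgauss.mono' (hf.norm.pow 2).aestronglyMeasurable
    (Filter.Eventually.of_forall fun x => ?_)
  calc ‖‖f x‖ ^ 2‖ = ‖f x‖ ^ 2 := Real.norm_of_nonneg (by positivity)
    _ ≤ Q.eval (x.1 ^ 2 + x.2 ^ 2) * Real.exp (-(β * (x.1 ^ 2 + x.2 ^ 2))) := hbound x
    _ ≤ C * Real.exp (β / 2 * (x.1 ^ 2 + x.2 ^ 2)) *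
          Real.exp (-(β * (x.1 ^ 2 + x.2 ^ 2))) := by
      gcongr
      exact (le_abs_self _).trans (hC _ (by positivity))
    _ = C * (Real.exp (-(β / 2) * x.1 ^ 2) * Real.exp (-(β / 2) * x.2 ^ 2)) := by
      rw [mul_assoc, ← Real.exp_add, ← Real.exp_add]
      ring_nf

lemma continuous_radialProfile (B : ℝ) (P : ℝ[X]) : Continuous (radialProfile B P) := by
  unfold radialProfile
  fun_prop

lemma continuous_Vkl (B : ℝ) (k : ℤ) (ℓ : ℕ) : Continuous (Vkl B k ℓ) := by
  have hg := continuous_radialProfile B (kummerPoly ℓ (1 + k.natAbs))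
  rw [Vkl_eq]
  fun_prop

lemma norm_add_signI_mul_sq (k : ℤ) (a b : ℝ) :
    ‖(a : ℂ) + signI k * b‖ ^ 2 = a ^ 2 + b ^ 2 := by
  rw [Complex.sq_norm, Complex.normSq_apply]
  unfold signI
  split_ifs <;> simp <;> ring

lemma memLp_Vkl {B : ℝ} (hB : 0 < B) (k : ℤ) (ℓ : ℕ) :
    MemLp (Vkl B k ℓ) 2 (volume : Measure (ℝ × ℝ)) := by
  -- `‖V x‖² = t ^ |k| * e^{-Bt/2} * P(Bt/2)²` with `t = |x|²`
  refine memLp_two_of_norm_sq_le (continuous_Vkl B k ℓ)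
    (X ^ k.natAbs * ((kummerPoly ℓ (1 + k.natAbs)).comp (C (B / 2) * X)) ^ 2) (half_pos hB)
    fun x => le_of_eq ?_
  rw [Vkl_eq, norm_mul, mul_pow, norm_pow, ← pow_mul, mul_comm _ 2, pow_mul,
    norm_add_signI_mul_sq, Complex.norm_real, Real.norm_eq_abs, sq_abs]
  simp only [radialProfile, eval_mul, eval_pow, eval_X, eval_comp, eval_C]
  rw [mul_pow, ← Real.exp_nat_mul]
  ring_nf

lemma Vkl_not_ae_eq_zero {B : ℝ} (hB : 0 < B) (k : ℤ) (ℓ : ℕ) :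
    ¬ Vkl B k ℓ =ᵐ[(volume : Measure (ℝ × ℝ))] 0 := by
  rw [Continuous.ae_eq_iff_eq volume (continuous_Vkl B k ℓ) continuous_zero]
  obtain ⟨s, hs : 0 < s, hPs⟩ :
      ∃ s ∈ Set.Ioi (0 : ℝ), ¬ (kummerPoly ℓ (1 + k.natAbs)).IsRoot s :=
    ((Set.Ioi_infinite 0).sdiff (finite_setOfPred_isRoot (kummerPoly_ne_zero _ _))).nonempty
  intro h
  have hx := congrFun h (√(2 * s / B), 0)
  have hsq : B * (√(2 * s / B) ^ 2 + 0 ^ 2) / 2 = s := by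
    rw [Real.sq_sqrt (by positivity)]
    field_simp
    ring
  simp only [Vkl_eq, radialProfile, hsq] at hx
  rw [IsRoot.def] at hPs
  have hr : √(2 * s / B) ≠ 0 := (Real.sqrt_pos.mpr (by positivity)).ne'
  exact hPs (by simpa [hr] using hx)

lemma landau_levels (B : ℝ) :
    {lam : ℝ | ∃ (k : ℤ) (ℓ : ℕ), lam = (2 * (ℓ : ℝ) + 1 + (k.natAbs : ℝ) - (k : ℝ)) * B} =
      {lam : ℝ | ∃ n : ℕ, lam = (2 * (n : ℝ) + 1) * B} := by
  ext lam
  constructor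
  · rintro ⟨k, ℓ, rfl⟩
    obtain ⟨m, rfl | rfl⟩ := Int.eq_nat_or_neg k
    · exact ⟨ℓ, by simp⟩
    · exact ⟨ℓ + m, by simp only [Int.natAbs_neg, Int.natAbs_natCast]; push_cast; ring⟩
  · rintro ⟨n, rfl⟩
    exact ⟨0, n, by simp⟩

/-- **Eigenfunctions and spectrum of the Landau Hamiltonian.** For every `k ∈ ℤ`, `ℓ ∈ ℕ`, the
function `V_{k,ℓ}` is a nonzero element of `L²(ℝ²)` and satisfies, at every `x ≠ 0`,
`−ΔV + iB₀(x₁∂₂V − x₂∂₁V) + (B₀²/4)|x|²V = (2ℓ+1+|k|−k)B₀ · V`.  Moreover the set of these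
eigenvalues equals the set of Landau levels `{(2n+1)B₀ : n ∈ ℕ}`. -/
theorem landau_eigenfunctions (B₀ : ℝ) (hB : 0 < B₀) :
    (∀ (k : ℤ) (ℓ : ℕ),
      MemLp (Vkl B₀ k ℓ) 2 (volume : Measure (ℝ × ℝ)) ∧
      ¬ (Vkl B₀ k ℓ =ᵐ[(volume : Measure (ℝ × ℝ))] 0) ∧
      ∀ x : ℝ × ℝ, x ≠ 0 →
        -(deriv (fun a : ℝ => deriv (fun a' : ℝ => Vkl B₀ k ℓ (a', x.2)) a) x.1 +
            deriv (fun b : ℝ => deriv (fun b' : ℝ => Vkl B₀ k ℓ (x.1, b')) b) x.2)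
          + Complex.I * (B₀ : ℂ) *
              ((x.1 : ℂ) * deriv (fun b : ℝ => Vkl B₀ k ℓ (x.1, b)) x.2 -
                (x.2 : ℂ) * deriv (fun a : ℝ => Vkl B₀ k ℓ (a, x.2)) x.1)
          + ((B₀ ^ 2 / 4 : ℝ) : ℂ) * ((x.1 ^ 2 + x.2 ^ 2 : ℝ) : ℂ) * Vkl B₀ k ℓ x
        = (((2 * (ℓ : ℝ) + 1 + (k.natAbs : ℝ) - (k : ℝ)) * B₀ : ℝ) : ℂ) * Vkl B₀ k ℓ x) ∧
    {lam : ℝ | ∃ (k : ℤ) (ℓ : ℕ), lam = (2 * (ℓ : ℝ) + 1 + (k.natAbs : ℝ) - (k : ℝ)) * B₀} =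
      {lam : ℝ | ∃ n : ℕ, lam = (2 * (n : ℝ) + 1) * B₀} :=
  ⟨fun k ℓ => ⟨memLp_Vkl hB k ℓ, Vkl_not_ae_eq_zero hB k ℓ, fun x _ => landauOp_Vkl B₀ k ℓ x⟩,
    landau_levels B₀⟩
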